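/- arXiv:2207.04342 — 2 statements merged into one kernel-verified Lean document; each statement's English description precedes it below -/
import Mathlib

section
/- Assume 0 ≤ g(T) ≤ M for all T ⊆ B. Let X, Y ⊆ V be such that X_A ⊊ R and Y_A = R. Then F(X) + F(Y) ≥ F(X ∪ Y) + F(X ∩ Y). -/
open Finset

variable {α : Type*}

/-- The function `f_{A,R}`: 0 on `R`, 1 on strict subsets/supersets of `R`, 2 otherwise. -/
noncomputable def fAR [DecidableEq α] (R T : Finset α) : ℝ :=
  if T = R then 0 else if T ⊂ R ∨ R ⊂ T then 1 else 2

/-- The submodularizer `φ` on subsets of `V`, where `B = V \ A`: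
`φ(S) = |S ∩ B|` if `S ∩ A ⊊ R`, `-|S ∩ B|` if `S ∩ A ⊋ R`, and `0` otherwise. -/
noncomputable def phi [DecidableEq α] (A R B S : Finset α) : ℝ :=
  if S ∩ A ⊂ R then ((S ∩ B).card : ℝ)
  else if R ⊂ S ∩ A then -((S ∩ B).card : ℝ)
  else 0

/-- The main building block
`F(S) = f_{A,R}(S ∩ A) + (1/(2n)) φ(S) + (1/(4Mn)) ⋅ 1[S ∩ A = R] ⋅ g(S ∩ B)`. -/
noncomputable def Fbb [DecidableEq α] (n : ℕ) (A R B : Finset α) (M : ℝ)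
    (g : Finset α → ℝ) (S : Finset α) : ℝ :=
  fAR R (S ∩ A) + (1 / (2 * (n : ℝ))) * phi A R B S
    + (1 / (4 * M * (n : ℝ))) * (if S ∩ A = R then (1 : ℝ) else 0) * g (S ∩ B)

/-!
On the four sets involved, `F` takes only two shapes: `(X ∪ Y) ∩ A = Y ∩ A = R` leaves only the
`g`-term, while `X ∩ A = (X ∩ Y) ∩ A ⊊ R` gives `1 + |S ∩ B| / (2n)`. If `X ∩ B ⊆ Y` the two sides
coincide. Otherwise `X ∩ Y ∩ B` misses a point of `X ∩ B`, which gains `1 / (2n)` on the right,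
while the `g`-term of `X ∪ Y` costs at most `M / (4Mn) = 1 / (4n)`.
-/

open Finset

section

variable [DecidableEq α] {n : ℕ} {A R B S : Finset α} {M : ℝ} {g : Finset α → ℝ}

theorem Fbb_of_inter_eq (hS : S ∩ A = R) : Fbb n A R B M g S = 1 / (4 * M * n) * g (S ∩ B) := by
  simp [Fbb, fAR, phi, hS]

theorem Fbb_of_inter_ssubset (hS : S ∩ A ⊂ R) :
    Fbb n A R B M g S = 1 + 1 / (2 * n) * #(S ∩ B) := by
  simp [Fbb, fAR, phi, hS, hS.ne, ssubset_asymm hS]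

end

theorem one_div_four_mul_mul_le_of_le {M t : ℝ} (n : ℝ) (hM : 0 < M) (ht : t ≤ M)
    (hn : 0 ≤ n) : 1 / (4 * M * n) * t ≤ 1 / (2 * n) :=
  calc 1 / (4 * M * n) * t ≤ 1 / (4 * M * n) * M := by gcongr
    _ = 1 / (2 * n) / 2 := by field_simp; ring
    _ ≤ 1 / (2 * n) := half_le_self (by positivity)

theorem card_inter_inter_lt_of_not_subset [DecidableEq α] {X Y B : Finset α}
    (h : ¬X ∩ B ⊆ Y) : #(X ∩ Y ∩ B) < #(X ∩ B) := by
  refine card_lt_card (ssubset_of_subset_of_ne (by grind) ?_)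
  rintro hXYB
  exact h (hXYB ▸ by grind)

theorem Fbb_case25_general [DecidableEq α] (V A R : Finset α)
    (hRA : R ⊆ A)
    (M : ℝ) (hM : 0 < M) (g : Finset α → ℝ)
    (hg : ∀ T ⊆ V \ A, 0 ≤ g T ∧ g T ≤ M)
    (X Y : Finset α)
    (hXA : X ∩ A ⊂ R) (hYA : Y ∩ A = R) :
    Fbb V.card A R (V \ A) M g (X ∪ Y) + Fbb V.card A R (V \ A) M g (X ∩ Y)
      ≤ Fbb V.card A R (V \ A) M g X + Fbb V.card A R (V \ A) M g Y := by
  have hUA : (X ∪ Y) ∩ A = R := by grind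
  have hIA : X ∩ Y ∩ A ⊂ R := by rwa [show X ∩ Y ∩ A = X ∩ A by grind]
  rw [Fbb_of_inter_eq hUA, Fbb_of_inter_eq hYA,
    Fbb_of_inter_ssubset hXA, Fbb_of_inter_ssubset hIA]
  set B := V \ A
  by_cases hXB : X ∩ B ⊆ Y
  · have hUB : (X ∪ Y) ∩ B = Y ∩ B := by grind
    have hIB : X ∩ Y ∩ B = X ∩ B := by grind
    rw [hUB, hIB]
    linarith
  · have hcard : (#(X ∩ Y ∩ B) : ℝ) + 1 ≤ #(X ∩ B) := by
      exact_mod_cast card_inter_inter_lt_of_not_subset hXB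
    obtain ⟨-, hgU⟩ := hg ((X ∪ Y) ∩ B) inter_subset_right
    have hgU_le := one_div_four_mul_mul_le_of_le (V.card : ℝ) hM hgU (by positivity)
    have hgY : 0 ≤ 1 / (4 * M * V.card) * g (Y ∩ B) :=
      mul_nonneg (by positivity) (hg _ inter_subset_right).1
    have hgap := mul_le_mul_of_nonneg_left hcard (by positivity : (0 : ℝ) ≤ 1 / (2 * V.card))
    linarith

/-- if 0 ≤ g ≤ M on subsets of B and X ∩ A ⊊ R, Y ∩ A = R, then F(X) + F(Y) ≥ F(X ∪ Y) + F(X ∩ Y). -/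
theorem Fbb_case25 [DecidableEq α] (V A R : Finset α) (hV : 1 ≤ V.card)
    (hA : A.Nonempty) (hR : R.Nonempty) (hRA : R ⊆ A) (hAV : A ⊆ V)
    (M : ℝ) (hM : 0 < M) (g : Finset α → ℝ)
    (hg : ∀ T ⊆ V \ A, 0 ≤ g T ∧ g T ≤ M)
    (X Y : Finset α) (hX : X ⊆ V) (hY : Y ⊆ V)
    (hXA : X ∩ A ⊂ R) (hYA : Y ∩ A = R) :
    Fbb V.card A R (V \ A) M g (X ∪ Y) + Fbb V.card A R (V \ A) M g (X ∩ Y)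
      ≤ Fbb V.card A R (V \ A) M g X + Fbb V.card A R (V \ A) M g Y :=
  Fbb_case25_general V A R hRA M hM g hg X Y hXA hYA
end

section
/- Let X, Y ⊆ V be such that X_A ⊊ R and Y_A is neither a subset nor a superset of R. Then F(X) + F(Y) ≥ F(X ∪ Y) + F(X ∩ Y). -/
open Finset

variable {α : Type*}

/- The hypotheses pin down every term except at `X ∪ Y`. The indicator term vanishes
on all four sets, since none of their traces on `A` equals `R`. Both `X` and `X ∩ Y` trace strictly
inside `R`, so each costs `1 + |· ∩ B| / (2n)`, and `X ∩ Y` costs no more than `X`. The set `Y` costs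
exactly `2`, while `X ∪ Y`, whose trace contains that of `Y` and so is not inside `R`, costs at
most `2` because there `f ≤ 2` and `φ ≤ 0`. -/

section

variable [DecidableEq α] {n : ℕ} {A R B : Finset α} {M : ℝ} {g : Finset α → ℝ} {S : Finset α}

theorem fAR_le_two (R T : Finset α) : fAR R T ≤ 2 := by
  unfold fAR
  split_ifs <;> norm_num

theorem fAR_of_ssubset {T : Finset α} (h : T ⊂ R) : fAR R T = 1 := by
  rw [fAR, if_neg h.ne, if_pos (Or.inl h)]

theorem fAR_of_not_subset_of_not_superset {T : Finset α} (h₁ : ¬T ⊆ R) (h₂ : ¬R ⊆ T) :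
    fAR R T = 2 := by
  rw [fAR, if_neg fun h => h₂ h.ge, if_neg]
  rintro (h | h)
  exacts [h₁ h.subset, h₂ h.subset]

theorem phi_of_ssubset (h : S ∩ A ⊂ R) : phi A R B S = (S ∩ B).card := by
  rw [phi, if_pos h]

theorem phi_nonpos_of_not_subset (h : ¬S ∩ A ⊆ R) : phi A R B S ≤ 0 := by
  rw [phi, if_neg fun h' => h h'.subset]
  split_ifs <;> simp

theorem phi_of_not_subset_of_not_superset (h₁ : ¬S ∩ A ⊆ R) (h₂ : ¬R ⊆ S ∩ A) :
    phi A R B S = 0 := by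
  rw [phi, if_neg fun h => h₁ h.subset, if_neg fun h => h₂ h.subset]

theorem Fbb_of_ne (h : S ∩ A ≠ R) :
    Fbb n A R B M g S = fAR R (S ∩ A) + 1 / (2 * (n : ℝ)) * phi A R B S := by
  rw [Fbb, if_neg h, mul_zero, zero_mul, add_zero]

theorem Fbb_of_ssubset (h : S ∩ A ⊂ R) :
    Fbb n A R B M g S = 1 + 1 / (2 * (n : ℝ)) * (S ∩ B).card := by
  rw [Fbb_of_ne h.ne, fAR_of_ssubset h, phi_of_ssubset h]

theorem Fbb_of_not_subset_of_not_superset (h₁ : ¬S ∩ A ⊆ R) (h₂ : ¬R ⊆ S ∩ A) :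
    Fbb n A R B M g S = 2 := by
  rw [Fbb_of_ne fun h => h₂ h.ge, fAR_of_not_subset_of_not_superset h₁ h₂,
    phi_of_not_subset_of_not_superset h₁ h₂, mul_zero, add_zero]

theorem Fbb_le_two_of_not_subset (h : ¬S ∩ A ⊆ R) : Fbb n A R B M g S ≤ 2 := by
  rw [Fbb_of_ne fun h' => h h'.le]
  have : 1 / (2 * (n : ℝ)) * phi A R B S ≤ 0 :=
    mul_nonpos_of_nonneg_of_nonpos (by positivity) (phi_nonpos_of_not_subset h)
  linarith [fAR_le_two R (S ∩ A)]

end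

theorem Fbb_case32_general [DecidableEq α] (V A R : Finset α)
    (M : ℝ) (g : Finset α → ℝ)

    (X Y : Finset α)
    (hXA : X ∩ A ⊂ R) (hYA : ¬ Y ∩ A ⊆ R ∧ ¬ R ⊆ Y ∩ A) :
    Fbb V.card A R (V \ A) M g (X ∪ Y) + Fbb V.card A R (V \ A) M g (X ∩ Y)
      ≤ Fbb V.card A R (V \ A) M g X + Fbb V.card A R (V \ A) M g Y := by
  obtain ⟨hYR, hRY⟩ := hYA
  have hinter : (X ∩ Y) ∩ A ⊂ R :=
    lt_of_le_of_lt (inter_subset_inter inter_subset_left le_rfl) hXA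
  have hunion : ¬(X ∪ Y) ∩ A ⊆ R :=
    fun h => hYR ((inter_subset_inter subset_union_right le_rfl).trans h)
  have hcard : (((X ∩ Y) ∩ (V \ A)).card : ℝ) ≤ (X ∩ (V \ A)).card := by
    exact_mod_cast card_le_card (inter_subset_inter inter_subset_left le_rfl)
  rw [Fbb_of_ssubset hinter, Fbb_of_ssubset hXA, Fbb_of_not_subset_of_not_superset hYR hRY]
  have := mul_le_mul_of_nonneg_left hcard (by positivity : (0 : ℝ) ≤ 1 / (2 * (V.card : ℝ)))
  linarith [Fbb_le_two_of_not_subset (n := V.card) (B := V \ A) (M := M) (g := g) hunion]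

/-- if X ∩ A ⊊ R and Y ∩ A is neither a subset nor a superset of R, then F(X) + F(Y) ≥ F(X ∪ Y) + F(X ∩ Y). -/
theorem Fbb_case32 [DecidableEq α] (V A R : Finset α) (hV : 1 ≤ V.card)
    (hA : A.Nonempty) (hR : R.Nonempty) (hRA : R ⊆ A) (hAV : A ⊆ V)
    (M : ℝ) (hM : 0 < M) (g : Finset α → ℝ)

    (X Y : Finset α) (hX : X ⊆ V) (hY : Y ⊆ V)
    (hXA : X ∩ A ⊂ R) (hYA : ¬ Y ∩ A ⊆ R ∧ ¬ R ⊆ Y ∩ A) :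
    Fbb V.card A R (V \ A) M g (X ∪ Y) + Fbb V.card A R (V \ A) M g (X ∩ Y)
      ≤ Fbb V.card A R (V \ A) M g X + Fbb V.card A R (V \ A) M g Y :=
  Fbb_case32_general V A R M g X Y hXA hYA
end
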